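/- arXiv:1511.03100 — 2 statements merged into one kernel-verified Lean document; each statement's English description precedes it below -/
import Mathlib

section
/- Let G be a connected bipartite distance-hereditary graph and let e = xy be a cut-edge of G. Then e is a bisimplicial edge of the pivot graph G^{e}. -/
open SimpleGraph

variable {α β : Type*}

/-- `G` contains an induced copy of `H`. -/
def HasInducedCopy (H : SimpleGraph β) (G : SimpleGraph α) : Prop :=
  ∃ f : β ↪ α, ∀ a b, G.Adj (f a) (f b) ↔ H.Adj a b

/-- The graph `2K₂`: two disjoint edges on four vertices. -/
def twoK2Graph : SimpleGraph (Fin 4) :=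
  SimpleGraph.fromEdgeSet {s(0, 1), s(2, 3)}

/-- The domino: a 6-cycle together with a chord joining two antipodal vertices. -/
def dominoGraph : SimpleGraph (Fin 6) :=
  SimpleGraph.fromEdgeSet {s(0, 1), s(1, 2), s(2, 3), s(3, 4), s(4, 5), s(5, 0), s(0, 3)}

/-- The arrow: a 4-cycle with two pendant vertices attached to two vertices of
the same color class. -/
def arrowGraph : SimpleGraph (Fin 6) :=
  SimpleGraph.fromEdgeSet {s(0, 1), s(1, 2), s(2, 3), s(3, 0), s(0, 4), s(2, 5)}

/-- `T₂`: the subdivision of the claw `K_{1,3}` obtained by inserting one new vertex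
into each edge. -/
def t2Graph : SimpleGraph (Fin 7) :=
  SimpleGraph.fromEdgeSet {s(0, 1), s(0, 2), s(0, 3), s(1, 4), s(2, 5), s(3, 6)}

/-- `G` has a hole: an induced chordless cycle of length at least 6. -/
def HasHole (G : SimpleGraph α) : Prop :=
  ∃ n, 6 ≤ n ∧ HasInducedCopy (SimpleGraph.cycleGraph n) G

/-- Bipartite distance-hereditary graph, via the forbidden induced subgraph
characterization: connected, bipartite, with no induced hole and no induced domino. -/
def IsBDH (G : SimpleGraph α) : Prop :=
  G.Connected ∧ G.Colorable 2 ∧ ¬ HasHole G ∧ ¬ HasInducedCopy dominoGraph G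

/-- The pivot `G^{uv}` of a graph on the pair `u v`: complement all edges between
`N(u) \ {v}` and `N(v) \ {u}`. -/
def gpivot (G : SimpleGraph α) (u v : α) : SimpleGraph α where
  Adj a b := a ≠ b ∧ Xor' (G.Adj a b)
    ((G.Adj u a ∧ a ≠ v ∧ G.Adj v b ∧ b ≠ u) ∨ (G.Adj u b ∧ b ≠ v ∧ G.Adj v a ∧ a ≠ u))
  symm := by
    constructor
    intro a b h
    refine ⟨h.1.symm, ?_⟩
    have hx := h.2
    rw [G.adj_comm b a, or_comm]
    exact hx
  loopless := ⟨fun a h => h.1 rfl⟩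

/-- `A`, `B` are the color classes of a bipartition of `G`. -/
def IsBipartitionWith (G : SimpleGraph α) (A B : Set α) : Prop :=
  (∀ v, v ∈ A ∨ v ∈ B) ∧ (∀ v, ¬ (v ∈ A ∧ v ∈ B)) ∧
    ∀ ⦃x y⦄, G.Adj x y → (x ∈ A ∧ y ∈ B) ∨ (x ∈ B ∧ y ∈ A)

/-- The neighborhoods of any two distinct vertices of `S` are comparable under inclusion. -/
def ChainOn (G : SimpleGraph α) (S : Set α) : Prop :=
  ∀ u ∈ S, ∀ u' ∈ S, u ≠ u' →
    G.neighborSet u ⊆ G.neighborSet u' ∨ G.neighborSet u' ⊆ G.neighborSet u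

/-- An edge `uv` is bisimplicial: `N(u) ∪ N(v)` induces a complete bipartite subgraph. -/
def Bisimplicial (G : SimpleGraph α) (u v : α) : Prop :=
  G.Adj u v ∧ ∀ a b, G.Adj v a → G.Adj u b → a ≠ b → G.Adj a b

/-- A pending edge: an edge one of whose endpoints has degree one. -/
def PendingEdge (G : SimpleGraph α) (u v : α) : Prop :=
  G.Adj u v ∧ ((∃! w, G.Adj u w) ∨ (∃! w, G.Adj v w))

/-- A proper bisimplicial edge: bisimplicial and not pending. -/
def ProperBisimplicial (G : SimpleGraph α) (u v : α) : Prop :=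
  Bisimplicial G u v ∧ ¬ PendingEdge G u v

/-- `G` is distance hereditary: every connected induced subgraph inherits distances. -/
def DistHereditary (G : SimpleGraph α) : Prop :=
  ∀ U : Set α, (G.induce U).Connected →
    ∀ u v : U, (G.induce U).dist u v = G.dist (u : α) (v : α)

/-- `G` can be built by the Bandelt–Mulder construction: there is an ordering of its
vertices such that every vertex apart from the first one is, at the time of its insertion,
either a pending vertex (exactly one earlier neighbor) or a twin of an earlier vertex
(same earlier neighbors as that vertex). -/
def BMConstructible (G : SimpleGraph α) : Prop :=
  ∃ (n : ℕ) (e : Fin n ≃ α), ∀ i : Fin n, 0 < (i : ℕ) →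
    (∃! w, (∃ j : Fin n, (j : ℕ) < (i : ℕ) ∧ e j = w) ∧ G.Adj (e i) w) ∨
    (∃ j : Fin n, (j : ℕ) < (i : ℕ) ∧
      ∀ x, (∃ k : Fin n, (k : ℕ) < (i : ℕ) ∧ e k = x) → (G.Adj (e i) x ↔ G.Adj (e j) x))

/-- One pivot step: `H` is obtained from `G` by pivoting on an edge of `G`. -/
def PivotStep (G H : SimpleGraph α) : Prop := ∃ u v, G.Adj u v ∧ H = gpivot G u v

/-- `H` belongs to the pivot-orbit of `G`. -/
def InPivotOrbit (G H : SimpleGraph α) : Prop := Relation.ReflTransGen PivotStep G H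

/-- A balanced bipartite graph: every induced cycle of length at least 6 has length
divisible by 4. -/
def BalancedGraph (G : SimpleGraph α) : Prop :=
  ∀ n, 6 ≤ n → HasInducedCopy (SimpleGraph.cycleGraph n) G → n % 4 = 0

/-- `H` is a minor of `G`, via branch sets. -/
def HasMinor (G : SimpleGraph α) (H : SimpleGraph β) : Prop :=
  ∃ B : β → Set α, (∀ w, (B w).Nonempty) ∧ (∀ w, (G.induce (B w)).Connected) ∧
    (∀ w w', w ≠ w' → Disjoint (B w) (B w')) ∧
    ∀ w w', H.Adj w w' → ∃ a ∈ B w, ∃ b ∈ B w', G.Adj a b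

/-- Outer-planar graph, via the forbidden minor characterization: no `K₄` minor and
no `K_{2,3}` minor. -/
def OuterplanarGraph (G : SimpleGraph α) : Prop :=
  ¬ HasMinor G (completeGraph (Fin 4)) ∧
  ¬ HasMinor G (completeBipartiteGraph (Fin 2) (Fin 3))

/-- `G` is 2-connected: connected and still connected after deleting any one vertex. -/
def TwoConnected (G : SimpleGraph α) : Prop :=
  G.Connected ∧ ∀ v : α, ((⊤ : G.Subgraph).deleteVerts {v}).coe.Connected

/-- `G` is a path graph: a tree in which every vertex has at most two neighbors. -/
def IsPathGraph (G : SimpleGraph α) : Prop :=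
  G.IsTree ∧ ∀ v a b c : α, G.Adj v a → G.Adj v b → G.Adj v c → a = b ∨ a = c ∨ b = c

/-- An abstract plane embedding of a graph `H`: a type of faces with a distinguished
outer face, where each edge borders a pair of distinct faces, and every face is
bordered by some edge. -/
structure PlaneEmbedding (H : SimpleGraph α) where
  F : Type
  outer : F
  border : Sym2 α → Sym2 F
  border_ne : ∀ e ∈ H.edgeSet, ¬ (border e).IsDiag
  face_mem : ∀ f : F, ∃ e ∈ H.edgeSet, f ∈ border e

/-- The plane dual graph of an embedding: faces are adjacent when they share an edge. -/
def PlaneEmbedding.dualGraph {H : SimpleGraph α} (P : PlaneEmbedding H) : SimpleGraph P.F :=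
  SimpleGraph.fromEdgeSet (P.border '' H.edgeSet)

/-- The weak dual: the subgraph of the dual induced by the bounded (non-outer) faces. -/
def PlaneEmbedding.weakDual {H : SimpleGraph α} (P : PlaneEmbedding H) :=
  P.dualGraph.induce {f | f ≠ P.outer}

/-- Vertex `x` lies on face `f` of the embedding. -/
def PlaneEmbedding.OnFace {H : SimpleGraph α} (P : PlaneEmbedding H) (x : α) (f : P.F) : Prop :=
  ∃ w, H.Adj x w ∧ f ∈ P.border s(x, w)

/-- `S` is the arc set of a directed path inside the arc set `D`. -/
def IsDirectedPathSet {W : Type*} (D S : Set (W × W)) : Prop :=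
  S ⊆ D ∧ ∃ (k : ℕ) (w : Fin (k + 1) → W), Function.Injective w ∧
    S = {p | ∃ i : Fin k, p = (w i.castSucc, w i.succ)}

/-! Pivoting on `xy` keeps the neighbourhoods of `x` and `y` and complements the edges between
`N(y) \ {x}` and `N(x) \ {y}`. Since `xy` is a bridge, no such edge exists in `G` (it would close a
4-cycle through `xy`), so after the pivot all of them are present. -/

section

variable {G : SimpleGraph α} {u v a b : α}

namespace SimpleGraph

lemma IsBridge.not_adj_of_adj_of_adj (h : G.IsBridge s(u, v)) (hub : G.Adj u b) (hva : G.Adj v a)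
    (hau : a ≠ u) (hbv : b ≠ v) : ¬ G.Adj a b := by
  intro hab
  have hdel : ∀ {p q : α}, G.Adj p q → s(p, q) ≠ s(u, v) → (G.deleteEdges {s(u, v)}).Adj p q :=
    fun hpq hne ↦ deleteEdges_adj.2 ⟨hpq, hne⟩
  refine h ((hdel hub ?_).reachable.trans ((hdel hab.symm ?_).reachable.trans
    (hdel hva.symm ?_).reachable))
  all_goals simp [hau, hbv, hub.ne', hva.ne']

end SimpleGraph

lemma gpivot_adj_left_iff : (gpivot G u v).Adj u a ↔ G.Adj u a := by
  refine ⟨fun ⟨_, h⟩ ↦ ?_, fun h ↦ ⟨h.ne, Or.inl ⟨h, ?_⟩⟩⟩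
  · rcases h with ⟨h, -⟩ | ⟨⟨h, -⟩ | ⟨-, -, -, h⟩, -⟩
    exacts [h, (G.irrefl h).elim, (h rfl).elim]
  · rintro (⟨h, -⟩ | ⟨-, -, -, h⟩)
    exacts [G.irrefl h, h rfl]

lemma gpivot_adj_right_iff : (gpivot G u v).Adj v a ↔ G.Adj v a := by
  refine ⟨fun ⟨_, h⟩ ↦ ?_, fun h ↦ ⟨h.ne, Or.inl ⟨h, ?_⟩⟩⟩
  · rcases h with ⟨h, -⟩ | ⟨⟨-, h, -⟩ | ⟨-, -, h, -⟩, -⟩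
    exacts [h, (h rfl).elim, (G.irrefl h).elim]
  · rintro (⟨-, h, -⟩ | ⟨-, -, h, -⟩)
    exacts [h rfl, G.irrefl h]

lemma gpivot_adj_of_not_adj (hva : G.Adj v a) (hau : a ≠ u) (hub : G.Adj u b) (hbv : b ≠ v)
    (hab : a ≠ b) (h : ¬ G.Adj a b) : (gpivot G u v).Adj a b :=
  ⟨hab, Or.inr ⟨Or.inr ⟨hub, hbv, hva, hau⟩, h⟩⟩

end

theorem stmt11 {α : Type*} (G : SimpleGraph α) (hG : IsBDH G) (x y : α)
    (hxy : G.Adj x y) (hcut : ¬ (G.deleteEdges {s(x, y)}).Connected) :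
    Bisimplicial (gpivot G x y) x y := by
  have hbridge : G.IsBridge s(x, y) :=
    not_not.1 (mt hG.1.connected_delete_edge_of_not_isBridge hcut)
  refine ⟨gpivot_adj_left_iff.2 hxy, fun a b hya hxb hab ↦ ?_⟩
  by_cases hax : a = x
  · exact hax ▸ hxb
  by_cases hby : b = y
  · exact hby ▸ hya.symm
  rw [gpivot_adj_right_iff] at hya
  rw [gpivot_adj_left_iff] at hxb
  exact gpivot_adj_of_not_adj hya hax hxb hby hab (hbridge.not_adj_of_adj_of_adj hxb hya hax hby)
end

section
/- Let G be a bipartite graph such that every graph in the pivot-orbit of G is balanced, meaning every induced cycle of length ≥ 6 has length divisible by 4. Then G has no induced hole at all; that is, G is chordal bipartite. -/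
open SimpleGraph

variable {α β : Type*}

/-!
Pivoting a hole `C_{n+2}` on one of its edges `uv` toggles only the pair formed by the other
neighbours of `u` and `v`; on the remaining `n` vertices this closes the path into an induced
`C_n`. A hole of length `k ≡ 0 (mod 4)` has `k ≥ 8`, so the pivot yields a hole of length
`k - 2 ≡ 2 (mod 4)`, contradicting balancedness of the pivot-orbit.
-/

theorem Nat.mod_eq_one_iff_of_lt_two_mul {m x : ℕ} (hm : 2 ≤ m) (hx : x < 2 * m) :
    x % m = 1 ↔ x = 1 ∨ x = m + 1 := by
  rcases Nat.lt_or_ge x m with h | h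
  · rw [Nat.mod_eq_of_lt h]; omega
  · rw [Nat.mod_eq_sub_mod h, Nat.mod_eq_of_lt (by omega)]; omega

theorem SimpleGraph.cycleGraph_adj_iff_val {n : ℕ} {a b : Fin (n + 2)} :
    (cycleGraph (n + 2)).Adj a b ↔
      a.val + 1 = b.val ∨ b.val + 1 = a.val ∨
        (a.val = 0 ∧ b.val = n + 1) ∨ (b.val = 0 ∧ a.val = n + 1) := by
  have ha := a.isLt
  have hb := b.isLt
  rw [cycleGraph_adj', Fin.sub_def, Fin.sub_def, Fin.val_mk, Fin.val_mk,
    Nat.mod_eq_one_iff_of_lt_two_mul (by omega) (by omega),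
    Nat.mod_eq_one_iff_of_lt_two_mul (by omega) (by omega)]
  omega

theorem gpivot_adj_of_ne {G : SimpleGraph α} {u v a b : α}
    (hau : a ≠ u) (hav : a ≠ v) (hbu : b ≠ u) (hbv : b ≠ v) :
    (gpivot G u v).Adj a b ↔
      a ≠ b ∧ (G.Adj a b ↔ ¬ ((G.Adj u a ∧ G.Adj v b) ∨ (G.Adj u b ∧ G.Adj v a))) := by
  simp only [gpivot, hau, hav, hbu, hbv, ne_eq, not_false_eq_true, and_true, true_and]
  exact and_congr_right fun _ => xor_iff_iff_not

theorem HasInducedCopy.exists_gpivot_cycleGraph {G : SimpleGraph α} {n : ℕ} (hn : 3 ≤ n)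
    (h : HasInducedCopy (cycleGraph (n + 2)) G) :
    ∃ u v, G.Adj u v ∧ HasInducedCopy (cycleGraph n) (gpivot G u v) := by
  obtain ⟨f, hf⟩ := h
  obtain ⟨n, rfl⟩ : ∃ m, n = m + 2 := ⟨n - 2, by omega⟩
  refine ⟨f 0, f 1, (hf 0 1).2 (cycleGraph_adj_iff_val.2 (.inl rfl)), (Fin.addNatEmb 2).trans f,
    fun a b => ?_⟩
  have hshift_ne : ∀ i : Fin (n + 2), f (i.addNat 2) ≠ f 0 ∧ f (i.addNat 2) ≠ f 1 := fun i => by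
    simp only [ne_eq, f.injective.eq_iff, Fin.ext_iff, Fin.val_addNat, Fin.val_zero, Fin.val_one]
    omega
  simp only [Function.Embedding.trans_apply, Fin.addNatEmb_apply]
  rw [gpivot_adj_of_ne (hshift_ne a).1 (hshift_ne a).2 (hshift_ne b).1 (hshift_ne b).2]
  simp only [hf, cycleGraph_adj_iff_val, ne_eq, f.injective.eq_iff, Fin.ext_iff, Fin.val_addNat,
    Fin.val_zero, Fin.val_one, true_and]
  have := a.isLt
  have := b.isLt
  omega

theorem stmt14_general {α : Type*} (G : SimpleGraph α)
    (hbal : ∀ H, InPivotOrbit G H → BalancedGraph H) :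
    ¬ HasHole G := by
  rintro ⟨k, hk, hcopy⟩
  have hk4 : k % 4 = 0 := hbal G .refl k hk hcopy
  obtain ⟨n, rfl⟩ : ∃ n, k = n + 2 := ⟨k - 2, by omega⟩
  obtain ⟨u, v, huv, hpivot⟩ := hcopy.exists_gpivot_cycleGraph (by omega)
  have hn4 : n % 4 = 0 := hbal _ (.single ⟨u, v, huv, rfl⟩) n (by omega) hpivot
  omega

theorem stmt14 {α : Type*} (G : SimpleGraph α) (hbip : G.Colorable 2)
    (hbal : ∀ H, InPivotOrbit G H → BalancedGraph H) :
    ¬ HasHole G :=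
  stmt14_general G hbal
end
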